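/- Expansion in higher-order Frobenius–Euler polynomials: D_n(x|a_1,…,a_r) = ∑_{m=0}^n ( ∑_{i=0}^{n-m} ∑_{l=0}^{n-m-i} C(s,i) C(n-i,l) (n)_i (1−λ)^{-i} S_1(n-i-l,m) D_l(a_1,…,a_r) ) H_m^{(s)}(x|λ), for λ ≠ 1 and integer s ≥ 0. -/

import Mathlib

open Finset PowerSeries

/-- Exponential generating function: `∑ f n * t^n / n!`. -/
noncomputable def egf (f : ℕ → ℚ) : PowerSeries ℚ :=
  PowerSeries.mk fun n => f n / n.factorial

/-- The formal power series `log(1+t) = ∑_{m≥1} (-1)^{m-1} t^m / m`. -/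
noncomputable def log1p : PowerSeries ℚ :=
  PowerSeries.mk fun n => if n = 0 then 0 else (-1) ^ (n - 1) / n

/-- Formal exponential composition: for `f` with zero constant term this is
`exp(f) = ∑_k f^k / k!` (the sum in each coefficient is finite). -/
noncomputable def expPS (f : PowerSeries ℚ) : PowerSeries ℚ :=
  PowerSeries.mk fun n =>
    ∑ k ∈ Finset.range (n + 1), (PowerSeries.coeff n (f ^ k)) / k.factorial

/-- `(1+t)^a := exp(a · log(1+t))` as a formal power series. -/
noncomputable def onePow (a : ℚ) : PowerSeries ℚ := expPS (PowerSeries.C a * log1p)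

/-- `e^{a t} = ∑ a^n t^n / n!`. -/
noncomputable def expAt (a : ℚ) : PowerSeries ℚ :=
  PowerSeries.mk fun n => a ^ n / n.factorial

/-- Falling factorial `(x)_n = x(x-1)⋯(x-n+1)`. -/
noncomputable def ffall (x : ℚ) (n : ℕ) : ℚ := ∏ i ∈ Finset.range n, (x - i)

/-!
Substituting `t ↦ log(1+t)` into the generating function of the Frobenius–Euler polynomials turns
`e^t` into `1+t` and `e^{xt}` into `(1+t)^x`, so that
`(1+t)^x = (1 + t/(1-λ))^s · ∑_m H_m^{(s)}(x|λ) log(1+t)^m/m!`, and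
`log(1+t)^m/m! = ∑_j S_1(j,m) t^j/j!`. The generating function of `D_n(x|a)` is that of
`D_n(a)` times `(1+t)^x`; comparing coefficients of `t^n` in the resulting triple product gives the
expansion.
-/

namespace Polynomial

theorem eq_of_forall_sum_range_mul_pow_eq {R : Type*} [CommRing R] [IsDomain R] [Infinite R]
    {a b : ℕ → R} {N : ℕ}
    (h : ∀ x : R, ∑ k ∈ range N, a k * x ^ k = ∑ k ∈ range N, b k * x ^ k) {k : ℕ}
    (hk : k < N) : a k = b k := by
  have hp := funext (p := ∑ k ∈ range N, C (a k) * X ^ k) (q := ∑ k ∈ range N, C (b k) * X ^ k)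
    (by simpa [eval_finsetSum] using h)
  simpa [finsetSum_coeff, coeff_C_mul, coeff_X_pow, hk] using congrArg (coeff · k) hp

end Polynomial

theorem Nat.descFactorial_mul_choose_mul_factorial_mul_factorial {n i l : ℕ} (h : i + l ≤ n) :
    n.descFactorial i * (n - i).choose l * l.factorial * (n - i - l).factorial = n.factorial := by
  rw [mul_assoc, mul_assoc, ← mul_assoc ((n - i).choose l), Nat.choose_mul_factorial_mul_factorial
    (by omega), mul_comm, Nat.factorial_mul_descFactorial (by omega)]

theorem Finset.sum_range_triangle_comm {M : Type*} [AddCommMonoid M] (n : ℕ)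
    (f : ℕ → ℕ → ℕ → M) :
    ∑ i ∈ range (n + 1), ∑ l ∈ range (n - i + 1), ∑ m ∈ range (n - i - l + 1), f i l m =
      ∑ m ∈ range (n + 1), ∑ i ∈ range (n - m + 1), ∑ l ∈ range (n - m - i + 1), f i l m :=
  calc _ = ∑ i ∈ range (n + 1), ∑ m ∈ range (n - i + 1), ∑ l ∈ range (n - m - i + 1), f i l m :=
        sum_congr rfl fun i _ => sum_comm' fun l m => by simp only [mem_range]; omega
    _ = _ := sum_comm' fun i m => by simp only [mem_range]; omega

namespace PowerSeries

variable {R : Type*} [CommRing R]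

theorem coeff_pow_eq_zero_of_constantCoeff_eq_zero {g : R⟦X⟧} (hg : constantCoeff g = 0)
    {n d : ℕ} (h : n < d) : coeff n (g ^ d) = 0 := by
  obtain ⟨g', rfl⟩ := X_dvd_iff.2 hg
  rw [mul_pow, coeff_X_pow_mul']
  simp [not_le.2 h]

theorem coeff_subst_eq_sum_range {g : R⟦X⟧} (hg : constantCoeff g = 0) (f : R⟦X⟧) (n : ℕ) :
    coeff n (f.subst g) = ∑ d ∈ range (n + 1), coeff d f * coeff n (g ^ d) := by
  rw [coeff_subst' (HasSubst.of_constantCoeff_zero' hg)]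
  refine finsum_eq_sum_of_support_subset _ fun d hd => ?_
  by_contra hdn
  simp only [coe_range, Set.mem_Iio, not_lt] at hdn
  exact hd (by simp [coeff_pow_eq_zero_of_constantCoeff_eq_zero hg (show n < d by omega)])

theorem coeff_mul_mul_eq_sum_range (f g h : R⟦X⟧) (n : ℕ) :
    coeff n (f * g * h) = ∑ i ∈ range (n + 1), ∑ l ∈ range (n - i + 1),
      coeff i f * coeff l g * coeff (n - i - l) h := by
  rw [mul_assoc, coeff_mul,
    Nat.sum_antidiagonal_eq_sum_range_succ (fun i j => coeff i f * coeff j (g * h))]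
  refine sum_congr rfl fun i _ => ?_
  rw [coeff_mul, Nat.sum_antidiagonal_eq_sum_range_succ (fun l j => coeff l g * coeff j h), mul_sum]
  exact sum_congr rfl fun l _ => (mul_assoc _ _ _).symm

theorem coeff_one_add_X_pow (s n : ℕ) : coeff n ((1 + X) ^ s : R⟦X⟧) = s.choose n := by
  have : ((1 + X) ^ s : R⟦X⟧) = (((1 + Polynomial.X) ^ s : Polynomial R) : R⟦X⟧) := by simp
  rw [this, Polynomial.coeff_coe, Polynomial.coeff_one_add_X_pow]

theorem coeff_one_add_C_mul_X_pow (c : R) (s n : ℕ) :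
    coeff n ((1 + C c * X) ^ s) = s.choose n * c ^ n := by
  rw [← rescale_X, ← map_one (rescale c), ← map_add, ← map_pow, coeff_rescale, mul_comm,
    coeff_one_add_X_pow]

end PowerSeries

theorem log1p_eq_log : log1p = log ℚ := by
  ext (_ | n)
  · simp [log1p]
  · simp [log1p, pow_succ]

theorem constantCoeff_log1p : constantCoeff log1p = 0 := by
  rw [log1p_eq_log, constantCoeff_log]

theorem hasSubst_log1p : HasSubst log1p := HasSubst.of_constantCoeff_zero' constantCoeff_log1p

theorem one_add_X_mul_derivative_log1p : (1 + X) * d⁄dX ℚ log1p = 1 := by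
  ext (_ | n)
  · simp [log1p_eq_log, deriv_log]
  · rw [add_mul, one_mul, map_add, coeff_succ_X_mul]
    simp [log1p_eq_log, deriv_log, pow_succ]

theorem derivative_expAt (a : ℚ) : d⁄dX ℚ (expAt a) = a • expAt a := by
  ext n
  simp only [expAt, coeff_derivative, coeff_mk, coeff_smul, smul_eq_mul, Nat.factorial_succ]
  push_cast
  field_simp
  ring

theorem onePow_eq_subst (a : ℚ) : onePow a = (expAt a).subst log1p := by
  ext n
  rw [coeff_subst_eq_sum_range constantCoeff_log1p, onePow, expPS, coeff_mk]
  refine sum_congr rfl fun k _ => ?_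
  rw [mul_pow, ← map_pow, coeff_C_mul, expAt, coeff_mk]
  ring

theorem one_add_X_mul_derivative_onePow (a : ℚ) :
    (1 + X) * d⁄dX ℚ (onePow a) = C a * onePow a := by
  rw [onePow_eq_subst, derivative_subst hasSubst_log1p, derivative_expAt, subst_smul hasSubst_log1p,
    smul_eq_C_mul, mul_comm, mul_assoc, mul_comm _ (1 + X), one_add_X_mul_derivative_log1p, mul_one]

theorem coeff_onePow (a : ℚ) (n : ℕ) : coeff n (onePow a) = ffall a n / n.factorial := by
  induction n with
  | zero =>
    simp [onePow_eq_subst, coeff_subst_eq_sum_range constantCoeff_log1p, expAt, ffall]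
  | succ n ih =>
    have h := congrArg (coeff n) (one_add_X_mul_derivative_onePow a)
    rw [add_mul, one_mul, map_add, coeff_derivative, coeff_C_mul] at h
    have hX : coeff n (X * d⁄dX ℚ (onePow a)) = n * coeff n (onePow a) := by
      cases n with
      | zero => simp
      | succ m => rw [coeff_succ_X_mul, coeff_derivative, ih]; push_cast; ring
    rw [hX, ih] at h
    rw [ffall, prod_range_succ, ← ffall, Nat.factorial_succ]
    have hn : (n.factorial : ℚ) ≠ 0 := by positivity
    push_cast
    field_simp at h ⊢
    linear_combination h

theorem subst_log1p_C (c : ℚ) : (C c).subst log1p = C c := by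
  rw [← coe_substAlgHom hasSubst_log1p]
  exact AlgHom.commutes _ c

theorem ffall_natCast (k n : ℕ) : ffall k n = k.descFactorial n := by
  rw [ffall, ← descPochhammer_eval_eq_prod_range, descPochhammer_eval_eq_descFactorial]

theorem onePow_natCast (k : ℕ) : onePow k = (1 + X) ^ k := by
  ext n
  rw [coeff_onePow, ffall_natCast, Nat.descFactorial_eq_factorial_mul_choose, coeff_one_add_X_pow]
  have : (n.factorial : ℚ) ≠ 0 := by positivity
  push_cast
  field_simp

theorem onePow_one : onePow 1 = 1 + X := by simpa using onePow_natCast 1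

theorem onePow_sub_one_ne_zero {a : ℚ} (ha : a ≠ 0) : onePow a - 1 ≠ 0 := fun h => by
  simpa [coeff_onePow, ffall, ha] using congrArg (coeff 1) h

theorem coeff_log1p_pow (S1 : ℕ → ℕ → ℚ)
    (hS1 : ∀ (l : ℕ) (x : ℚ), ffall x l = ∑ j ∈ range (l + 1), S1 l j * x ^ j)
    {j m : ℕ} (hm : m ≤ j) : coeff j (log1p ^ m) = m.factorial * S1 j m / j.factorial := by
  -- both sides are `coeff j ((1+t)^x)`, read as a polynomial in `x`
  have key : ∀ x : ℚ, ∑ k ∈ range (j + 1), coeff j (log1p ^ k) / k.factorial * x ^ k =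
      ∑ k ∈ range (j + 1), S1 j k / j.factorial * x ^ k := fun x => by
    have h := coeff_onePow x j
    rw [onePow_eq_subst, coeff_subst_eq_sum_range constantCoeff_log1p, hS1, sum_div] at h
    convert h using 2 with k _ k _
    · simp only [expAt, coeff_mk]; ring
    · ring
  have hm' := Polynomial.eq_of_forall_sum_range_mul_pow_eq key (Nat.lt_succ_of_le hm)
  have : (m.factorial : ℚ) ≠ 0 := by positivity
  field_simp at hm' ⊢
  linear_combination hm'

theorem coeff_egf (f : ℕ → ℚ) (n : ℕ) : coeff n (egf f) = f n / n.factorial := coeff_mk _ _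

theorem coeff_subst_log1p_egf (S1 : ℕ → ℕ → ℚ)
    (hS1 : ∀ (l : ℕ) (x : ℚ), ffall x l = ∑ j ∈ range (l + 1), S1 l j * x ^ j) (f : ℕ → ℚ)
    (j : ℕ) : coeff j ((egf f).subst log1p) = ∑ m ∈ range (j + 1), f m * S1 j m / j.factorial := by
  rw [coeff_subst_eq_sum_range constantCoeff_log1p]
  refine sum_congr rfl fun m hm => ?_
  rw [coeff_egf, coeff_log1p_pow S1 hS1 (Nat.lt_succ_iff.1 (mem_range.1 hm))]
  have : (m.factorial : ℚ) ≠ 0 := by positivity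
  field_simp

theorem egf_eq_egf_zero_mul_onePow {r : ℕ} {a : Fin r → ℚ} (ha : ∀ j, a j ≠ 0) {D : ℕ → ℚ → ℚ}
    (hD : ∀ x : ℚ, (∏ j, (onePow (a j) - 1)) * egf (fun n => D n x) = log1p ^ r * onePow x)
    (x : ℚ) : egf (fun n => D n x) = egf (fun n => D n 0) * onePow x := by
  refine mul_left_cancel₀ (prod_ne_zero_iff.2 fun j _ => onePow_sub_one_ne_zero (ha j) :
    ∏ j, (onePow (a j) - 1) ≠ 0) ?_
  rw [hD x, ← mul_assoc, hD 0, ← Nat.cast_zero, onePow_natCast, pow_zero, mul_one]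

theorem onePow_eq_mul_subst_log1p_egf {s : ℕ} {lam : ℚ} (hlam : lam ≠ 1) {H : ℕ → ℚ → ℚ}
    (x : ℚ) (hH : (expAt 1 - C lam) ^ s * egf (fun n => H n x) = C (1 - lam) ^ s * expAt x) :
    onePow x = (1 + C (1 - lam)⁻¹ * X) ^ s * (egf fun n => H n x).subst log1p := by
  have hlam' : 1 - lam ≠ 0 := sub_ne_zero.2 hlam.symm
  have h := congrArg (substAlgHom hasSubst_log1p) hH
  rw [map_mul, map_pow, map_sub, map_mul, map_pow] at h
  simp only [coe_substAlgHom, ← onePow_eq_subst, subst_log1p_C, onePow_one] at h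
  rw [show 1 + X - C lam = C (1 - lam) * (1 + C (1 - lam)⁻¹ * X) by
      rw [mul_add, ← mul_assoc, ← map_mul, mul_inv_cancel₀ hlam', map_sub, map_one]; ring,
    mul_pow, mul_assoc] at h
  exact (mul_left_cancel₀ (pow_ne_zero _ ((map_ne_zero_iff _ C_injective).2 hlam')) h).symm

theorem factorial_mul_sum_triangle_eq (n : ℕ) (a d h : ℕ → ℚ) (S : ℕ → ℕ → ℚ) :
    n.factorial * ∑ i ∈ range (n + 1), ∑ l ∈ range (n - i + 1), a i * (d l / l.factorial) *
        ∑ m ∈ range (n - i - l + 1), h m * S (n - i - l) m / (n - i - l).factorial =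
      ∑ m ∈ range (n + 1), (∑ i ∈ range (n - m + 1), ∑ l ∈ range (n - m - i + 1),
        a i * ((n - i).choose l : ℚ) * ffall n i * S (n - i - l) m * d l) * h m := by
  simp only [mul_sum, sum_mul]
  rw [sum_range_triangle_comm]
  refine sum_congr rfl fun m _ => sum_congr rfl fun i hi => sum_congr rfl fun l hl => ?_
  simp only [mem_range] at hi hl
  have key : (n.descFactorial i * (n - i).choose l * l.factorial * (n - i - l).factorial : ℚ) =
      n.factorial := by
    exact_mod_cast Nat.descFactorial_mul_choose_mul_factorial_mul_factorial (by omega)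
  rw [ffall_natCast, ← key]
  have : (l.factorial : ℚ) ≠ 0 := by positivity
  have : ((n - i - l).factorial : ℚ) ≠ 0 := by positivity
  field_simp

theorem stmt15 (r : ℕ) (a : Fin r → ℚ) (ha : ∀ j, a j ≠ 0) (s : ℕ) (lam : ℚ) (hlam : lam ≠ 1) (D : ℕ → ℚ → ℚ)
    (hD : ∀ x : ℚ, (∏ j, (onePow (a j) - 1)) * egf (fun n => D n x) = log1p ^ r * onePow x)
    (S1 : ℕ → ℕ → ℚ) (hS1 : ∀ (l : ℕ) (x : ℚ), ffall x l = ∑ j ∈ Finset.range (l + 1), S1 l j * x ^ j)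
    (H : ℕ → ℚ → ℚ)
    (hH : ∀ x : ℚ, (expAt 1 - PowerSeries.C lam) ^ s * egf (fun n => H n x) =
      (PowerSeries.C (1 - lam)) ^ s * expAt x)
    (n : ℕ) (x : ℚ) :
    D n x = ∑ m ∈ Finset.range (n + 1),
      (∑ i ∈ Finset.range (n - m + 1), ∑ l ∈ Finset.range (n - m - i + 1),
        (s.choose i : ℚ) * ((n - i).choose l : ℚ) * ffall (n : ℚ) i *
          (1 - lam) ^ (-(i : ℤ)) * S1 (n - i - l) m * D l 0) * H m x := by
  have h := congrArg (coeff n) (egf_eq_egf_zero_mul_onePow ha hD x)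
  rw [onePow_eq_mul_subst_log1p_egf hlam x (hH x), mul_left_comm, ← mul_assoc,
    coeff_mul_mul_eq_sum_range, coeff_egf, div_eq_iff (by positivity)] at h
  simp only [coeff_one_add_C_mul_X_pow, coeff_egf, coeff_subst_log1p_egf S1 hS1] at h
  rw [h, mul_comm, factorial_mul_sum_triangle_eq]
  refine sum_congr rfl fun m _ => congrArg (· * H m x) (sum_congr rfl fun i _ =>
    sum_congr rfl fun l _ => by rw [zpow_neg, zpow_natCast, inv_pow]; ring)
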